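/- Define recursively Σ¹ := {ω ∈ Σ⁰ : dω ∈ ⟨Σ⁰⟩}, Σ^{i+1} := {ω ∈ Σ^i : dω ∈ ⟨Σ^i⟩}, and Σ̃^{i+1} := {ω ∈ Σ̃^i : dω ∈ ⟨Σ̃^i⟩}. Then the two decreasing sequences interleave: Σ̃¹ ⊇ Σ¹ ⊇ Σ̃² ⊇ Σ² ⊇ … ⊇ Σ̃^p ⊇ Σ^p ⊇ …, i.e. for every p ≥ 1 one has Σ^p ⊆ Σ̃^p and Σ̃^{p+1} ⊆ Σ^p. -/

import Mathlib

/- Setting: the evolution space E = ℝ × ℝ^n × ℝ^n with coordinates (t, x^a, u^a),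
   a SODE ẍ^a = F^a(t,x,ẋ), and all the associated geometric objects. -/

noncomputable section

namespace IP

/-- The evolution space ℝ^{1+2n} with coordinates (t, x, u). -/
abbrev E (n : ℕ) : Type := ℝ × (Fin n → ℝ) × (Fin n → ℝ)

variable {n : ℕ}

/-- the coordinate vector ∂/∂t -/
def et (n : ℕ) : E n := (1, 0, 0)

/-- the coordinate vector ∂/∂x^a -/
def ex (a : Fin n) : E n := (0, Pi.single a 1, 0)

/-- the coordinate vector ∂/∂u^a -/
def eu (a : Fin n) : E n := (0, 0, Pi.single a 1)

/-- the SODE vector field Γ = ∂/∂t + u^a ∂/∂x^a + F^a ∂/∂u^a (its value at p) -/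
def GamV (F : Fin n → E n → ℝ) (p : E n) : E n := (1, p.2.2, fun a => F a p)

/-- Γ acting on functions as a first-order differential operator -/
def Gam (F : Fin n → E n → ℝ) (f : E n → ℝ) (p : E n) : ℝ := fderiv ℝ f p (GamV F p)

/-- the nonlinear connection coefficients Γ^a_b = -(1/2) ∂F^a/∂u^b -/
def Gc (F : Fin n → E n → ℝ) (a b : Fin n) (p : E n) : ℝ :=
  -(1 / 2) * fderiv ℝ (F a) p (eu b)

/-- the Jacobi endomorphism Φ^a_b = -∂F^a/∂x^b - Γ^c_b Γ^a_c - Γ(Γ^a_b) -/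
def Phi (F : Fin n → E n → ℝ) (a b : Fin n) (p : E n) : ℝ :=
  -(fderiv ℝ (F a) p (ex b)) - (∑ c, Gc F c b p * Gc F a c p) - Gam F (Gc F a b) p

/-- the contact 1-form θ^a = dx^a - u^a dt -/
def theta (a : Fin n) (p v : E n) : ℝ := v.2.1 a - p.2.2 a * v.1

/-- the 1-form ψ^a = du^a - F^a dt + Γ^a_b θ^b -/
def psi (F : Fin n → E n → ℝ) (a : Fin n) (p v : E n) : ℝ :=
  v.2.2 a - F a p * v.1 + ∑ b, Gc F a b p * theta b p v

/-- the vertical vector field V_a = ∂/∂u^a -/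
def Vv (a : Fin n) : E n := eu a

/-- the horizontal vector field H_a = ∂/∂x^a - Γ^b_a ∂/∂u^b (its value at p) -/
def Hv (F : Fin n → E n → ℝ) (a : Fin n) (p : E n) : E n :=
  (0, Pi.single a 1, fun b => -(Gc F b a p))

/-- exterior derivative of a 1-form, evaluated on (constant extensions of) vectors -/
def d1 (ω : E n → E n → ℝ) (p v w : E n) : ℝ :=
  fderiv ℝ (fun q => ω q w) p v - fderiv ℝ (fun q => ω q v) p w

/-- exterior derivative of a 2-form, evaluated on (constant extensions of) vectors -/
def d2 (Ω : E n → E n → E n → ℝ) (p v1 v2 v3 : E n) : ℝ :=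
  fderiv ℝ (fun q => Ω q v2 v3) p v1 - fderiv ℝ (fun q => Ω q v1 v3) p v2 +
    fderiv ℝ (fun q => Ω q v1 v2) p v3

/-- Lie bracket of vector fields on E -/
def lie (X Y : E n → E n) (p : E n) : E n := fderiv ℝ Y p (X p) - fderiv ℝ X p (Y p)

/-- the four Helmholtz conditions for a multiplier matrix g on U -/
def Helmholtz (F : Fin n → E n → ℝ) (U : Set (E n)) (g : Fin n → Fin n → E n → ℝ) : Prop :=
  (∀ p ∈ U, ∀ a b, g a b p = g b a p) ∧
  (∀ p ∈ U, ∀ a b, Gam F (g a b) p =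
      (∑ c, g a c p * Gc F c b p) + ∑ c, g b c p * Gc F c a p) ∧
  (∀ p ∈ U, ∀ a b, (∑ c, g a c p * Phi F c b p) = ∑ c, g b c p * Phi F c a p) ∧
  (∀ p ∈ U, ∀ a b c, fderiv ℝ (g a b) p (eu c) = fderiv ℝ (g a c) p (eu b))

/-- the curvature components R^d_{ef} -/
def Rcoord (F : Fin n → E n → ℝ) (d e f : Fin n) (p : E n) : ℝ :=
  (1 / 2) * (fderiv ℝ (fun q => fderiv ℝ (F d) q (eu f)) p (ex e)
    - fderiv ℝ (fun q => fderiv ℝ (F d) q (eu e)) p (ex f)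
    + (1 / 2) * ((∑ c, fderiv ℝ (F c) p (eu e) *
            fderiv ℝ (fun q => fderiv ℝ (F d) q (eu f)) p (eu c))
        - ∑ c, fderiv ℝ (F c) p (eu f) *
            fderiv ℝ (fun q => fderiv ℝ (F d) q (eu e)) p (eu c)))

/-- wedge product of two 1-forms -/
def w11 (α β : E n → E n → ℝ) (p v w : E n) : ℝ := α p v * β p w - α p w * β p v

/-- wedge product of a 1-form with a 2-form -/
def w12 (α : E n → E n → ℝ) (Ω : E n → E n → E n → ℝ) (p v1 v2 v3 : E n) : ℝ :=
  α p v1 * Ω p v2 v3 - α p v2 * Ω p v1 v3 + α p v3 * Ω p v1 v2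

/-- a smooth 1-form on U -/
def Smooth1 (U : Set (E n)) (α : E n → E n → ℝ) : Prop :=
  (∀ v, ContDiffOn ℝ (⊤ : ℕ∞) (fun q => α q v) U) ∧ ∀ p ∈ U, IsLinearMap ℝ (α p)

/-- the 2-form Ω = g_{ab} ψ^a ∧ θ^b -/
def OmegaG (F : Fin n → E n → ℝ) (g : Fin n → Fin n → E n → ℝ) :
    E n → E n → E n → ℝ :=
  fun q v w => ∑ a, ∑ b, g a b q * w11 (psi F a) (theta b) q v w

end IP
/- Eigenstructure of Φ: distinct smooth eigenvalues, eigenvector fields X_a forming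
   a basis at every point, dual coframe φ^a, the lifted eigenforms φ^{aV}, φ^{aH},
   the 2-forms ω^{ab}, ω^a, the structure functions τ and the curvature functions R. -/

namespace IP

variable {n : ℕ}

/-- the vertical eigenform φ^{aV} = φ^a_c ψ^c -/
def phiV (F : Fin n → E n → ℝ) (phc : Fin n → Fin n → E n → ℝ) (a : Fin n)
    (p v : E n) : ℝ :=
  ∑ c, phc a c p * psi F c p v

/-- the horizontal eigenform φ^{aH} = φ^a_c θ^c -/
def phiH (phc : Fin n → Fin n → E n → ℝ) (a : Fin n) (p v : E n) : ℝ :=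
  ∑ c, phc a c p * theta c p v

/-- the vertical eigenvector field X_a^V = X^c_a V_c -/
def XVf (X : Fin n → Fin n → E n → ℝ) (a : Fin n) (p : E n) : E n :=
  (0, 0, fun c => X a c p)

/-- the horizontal eigenvector field X_a^H = X^c_a H_c -/
def XHf (F : Fin n → E n → ℝ) (X : Fin n → Fin n → E n → ℝ) (a : Fin n) (p : E n) : E n :=
  (0, fun c => X a c p, fun b => -∑ c, X a c p * Gc F b c p)

/-- the 2-forms ω^{ab} = (1/2)(φ^{aV} ∧ φ^{bH} + φ^{bV} ∧ φ^{aH}) -/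
def omab (F : Fin n → E n → ℝ) (phc : Fin n → Fin n → E n → ℝ) (a b : Fin n)
    (p v w : E n) : ℝ :=
  (1 / 2) * (w11 (phiV F phc a) (phiH phc b) p v w + w11 (phiV F phc b) (phiH phc a) p v w)

/-- the 2-forms ω^a = φ^{aV} ∧ φ^{aH} -/
def oma (F : Fin n → E n → ℝ) (phc : Fin n → Fin n → E n → ℝ) (a : Fin n)
    (p v w : E n) : ℝ :=
  w11 (phiV F phc a) (phiH phc a) p v w

/-- the structure functions τ^{aΓ}_b = -dφ^{aV}(Γ, X_b^V) -/
def tauG (F : Fin n → E n → ℝ) (X phc : Fin n → Fin n → E n → ℝ) (a b : Fin n)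
    (p : E n) : ℝ :=
  -(d1 (phiV F phc a) p (GamV F p) (XVf X b p))

/-- the structure functions τ^{aH}_{bc} = dφ^{aV}(X_c^V, X_b^H) -/
def tauH (F : Fin n → E n → ℝ) (X phc : Fin n → Fin n → E n → ℝ) (a b c : Fin n)
    (p : E n) : ℝ :=
  d1 (phiV F phc a) p (XVf X c p) (XHf F X b p)

/-- the structure functions τ^{aV}_{bc} = -dφ^{aH}(X_b^V, X_c^H) -/
def tauV (F : Fin n → E n → ℝ) (X phc : Fin n → Fin n → E n → ℝ) (a b c : Fin n)
    (p : E n) : ℝ :=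
  -(d1 (phiH phc a) p (XVf X b p) (XHf F X c p))

/-- the curvature functions R^a_{bc} = φ^a_d X^e_b X^f_c R^d_{ef} -/
def Rphi (F : Fin n → E n → ℝ) (X phc : Fin n → Fin n → E n → ℝ) (a b c : Fin n)
    (p : E n) : ℝ :=
  ∑ d, ∑ e, ∑ f, phc a d p * X b e p * X c f p * Rcoord F d e f p

/-- The standing hypotheses: F smooth, Φ diagonalisable on U with smooth eigenvalues λ_a,
pairwise distinct at every point, smooth eigenvector fields X_a (components X^c_a = `X a c`)
forming a basis of ℝ^n at every point, and dual coframe φ^a (components φ^a_c = `phc a c`). -/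
structure EigenData (F : Fin n → E n → ℝ) (U : Set (E n)) (lam : Fin n → E n → ℝ)
    (X phc : Fin n → Fin n → E n → ℝ) : Prop where
  smooth_F : ∀ a, ContDiffOn ℝ (⊤ : ℕ∞) (F a) U
  smooth_lam : ∀ a, ContDiffOn ℝ (⊤ : ℕ∞) (lam a) U
  smooth_X : ∀ a c, ContDiffOn ℝ (⊤ : ℕ∞) (X a c) U
  smooth_phc : ∀ a c, ContDiffOn ℝ (⊤ : ℕ∞) (phc a c) U
  distinct : ∀ p ∈ U, ∀ a b, a ≠ b → lam a p ≠ lam b p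
  eigen : ∀ p ∈ U, ∀ a c, (∑ d, Phi F c d p * X a d p) = lam a p * X a c p
  dual : ∀ p ∈ U, ∀ a b, (∑ c, phc a c p * X b c p) = if a = b then (1 : ℝ) else 0

/-- `dη ∈ ⟨S⟩`: the 3-form η lies in the ideal generated by the 2-forms in S
(with smooth 1-form coefficients), as forms on U -/
def InIdeal (U : Set (E n)) (S : Set (E n → E n → E n → ℝ))
    (η : E n → E n → E n → E n → ℝ) : Prop :=
  ∃ (m : ℕ) (Ω : Fin m → E n → E n → E n → ℝ) (α : Fin m → E n → E n → ℝ),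
    (∀ j, Ω j ∈ S) ∧ (∀ j, Smooth1 U (α j)) ∧
      ∀ p ∈ U, ∀ v1 v2 v3, η p v1 v2 v3 = ∑ j, w12 (α j) (Ω j) p v1 v2 v3

/-- the C^∞(U)-module Σ⁰ spanned by {ω^{ab} : a ≤ b} (as forms on U) -/
def Sigma0 (F : Fin n → E n → ℝ) (phc : Fin n → Fin n → E n → ℝ) (U : Set (E n)) :
    Set (E n → E n → E n → ℝ) :=
  {ω | ∃ r : Fin n → Fin n → E n → ℝ,
      (∀ a b, ContDiffOn ℝ (⊤ : ℕ∞) (r a b) U) ∧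
      ∀ p ∈ U, ∀ v w, ω p v w =
        ∑ a, ∑ b, if a ≤ b then r a b p * omab F phc a b p v w else 0}

/-- the C^∞(U)-module Σ̃¹ spanned by {ω^a} (as forms on U) -/
def SigmaT1 (F : Fin n → E n → ℝ) (phc : Fin n → Fin n → E n → ℝ) (U : Set (E n)) :
    Set (E n → E n → E n → ℝ) :=
  {ω | ∃ r : Fin n → E n → ℝ,
      (∀ a, ContDiffOn ℝ (⊤ : ℕ∞) (r a) U) ∧
      ∀ p ∈ U, ∀ v w, ω p v w = ∑ a, r a p * oma F phc a p v w}

/-- one step of the differential-ideal recursion: {ω ∈ S : dω ∈ ⟨S⟩} -/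
def Next (U : Set (E n)) (S : Set (E n → E n → E n → ℝ)) : Set (E n → E n → E n → ℝ) :=
  {ω | ω ∈ S ∧ InIdeal U S (d2 ω)}

/-- the sequence Σ⁰, Σ¹, Σ², …  (`SigSeq F phc U i` is Σ^i) -/
def SigSeq (F : Fin n → E n → ℝ) (phc : Fin n → Fin n → E n → ℝ) (U : Set (E n)) :
    ℕ → Set (E n → E n → E n → ℝ)
  | 0 => Sigma0 F phc U
  | k + 1 => Next U (SigSeq F phc U k)

/-- the sequence Σ̃¹, Σ̃², …  (`SigTSeq F phc U i` is Σ̃^{i+1}) -/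
def SigTSeq (F : Fin n → E n → ℝ) (phc : Fin n → Fin n → E n → ℝ) (U : Set (E n)) :
    ℕ → Set (E n → E n → E n → ℝ)
  | 0 => SigmaT1 F phc U
  | k + 1 => Next U (SigTSeq F phc U k)

def ia (n : ℕ) (a : Fin n) : Fin (2 * n) := ⟨2 * a.1, by have := a.2; omega⟩

def ib (n : ℕ) (a : Fin n) : Fin (2 * n) := ⟨2 * a.1 + 1, by have := a.2; omega⟩

/-- the wedge product ω_1 ∧ ω_2 ∧ ⋯ ∧ ω_n of n 2-forms, as a 2n-form -/
def WedgeN (ωs : Fin n → E n → E n → E n → ℝ) (p : E n) (v : Fin (2 * n) → E n) : ℝ :=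
  (1 / 2 ^ n) * ∑ σ : Equiv.Perm (Fin (2 * n)),
    ((Equiv.Perm.sign σ : ℤ) : ℝ) * ∏ a, ωs a p (v (σ (ia n a))) (v (σ (ib n a)))

/-- Frobenius integrability of the eigen co-distribution D_a^⊥ = span{φ^{aV}, φ^{aH}} -/
def Integrable1 (F : Fin n → E n → ℝ) (phc : Fin n → Fin n → E n → ℝ) (U : Set (E n))
    (a : Fin n) : Prop :=
  ∃ α β γ δ : E n → E n → ℝ,
    Smooth1 U α ∧ Smooth1 U β ∧ Smooth1 U γ ∧ Smooth1 U δ ∧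
    (∀ p ∈ U, ∀ v w, d1 (phiV F phc a) p v w =
        w11 α (phiV F phc a) p v w + w11 β (phiH phc a) p v w) ∧
    (∀ p ∈ U, ∀ v w, d1 (phiH phc a) p v w =
        w11 γ (phiV F phc a) p v w + w11 δ (phiH phc a) p v w)

end IP


/-!
An element `ω = ∑_{a ≤ b} r_{ab} ω^{ab}` of `Σ⁰` vanishes on `Γ` and on pairs of horizontal
vectors, hence so does every 3-form of `⟨Σ⁰⟩` on `(Γ, X_c^H, X_d^H)`. On the other hand
`dψ^a(Γ, X_c^H) = -Φ^a_b X_c^b = -λ_c X_c^a`, and since all `φ^{aV}` vanish on these three vectors,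
`dω(Γ, X_c^H, X_d^H) = (λ_d - λ_c) r_{cd} / 2`. As the eigenvalues are distinct, `dω ∈ ⟨Σ⁰⟩`
forces `r_{cd} = 0` for `c < d`, i.e. `Σ¹ ⊆ Σ̃¹`; with `Σ̃¹ ⊆ Σ⁰` the interleaving follows by
induction, since `S ↦ {ω ∈ S : dω ∈ ⟨S⟩}` is monotone.
-/

namespace IP

variable {n : ℕ} {p : E n}

theorem d2_congr_of_eqOn {U : Set (E n)} (hU : IsOpen U) (hp : p ∈ U)
    {Ω Ω' : E n → E n → E n → ℝ} (h : ∀ q ∈ U, ∀ v w, Ω q v w = Ω' q v w) :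
    d2 Ω p = d2 Ω' p := by
  have hfd : ∀ v w, fderiv ℝ (fun q => Ω q v w) p = fderiv ℝ (fun q => Ω' q v w) p :=
    fun v w => Filter.EventuallyEq.fderiv_eq
      (Filter.eventuallyEq_of_mem (hU.mem_nhds hp) fun q hq => h q hq v w)
  funext v1 v2 v3
  simp only [d2, hfd]

theorem d2_add {Ω Ω' : E n → E n → E n → ℝ}
    (hΩ : ∀ v w, DifferentiableAt ℝ (fun q => Ω q v w) p)
    (hΩ' : ∀ v w, DifferentiableAt ℝ (fun q => Ω' q v w) p) (v1 v2 v3 : E n) :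
    d2 (fun q v w => Ω q v w + Ω' q v w) p v1 v2 v3 = d2 Ω p v1 v2 v3 + d2 Ω' p v1 v2 v3 := by
  simp only [d2, fderiv_fun_add (hΩ _ _) (hΩ' _ _), add_apply]
  ring

theorem d2_sum {ι : Type*} [Fintype ι] {Ω : ι → E n → E n → E n → ℝ}
    (hΩ : ∀ i v w, DifferentiableAt ℝ (fun q => Ω i q v w) p) (v1 v2 v3 : E n) :
    d2 (fun q v w => ∑ i, Ω i q v w) p v1 v2 v3 = ∑ i, d2 (Ω i) p v1 v2 v3 := by
  simp only [d2, fderiv_fun_sum fun i _ => hΩ i _ _, FunLike.coe_sum,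
    Finset.sum_apply, Finset.sum_add_distrib, Finset.sum_sub_distrib]

theorem fderiv_mul_w11_of_eq_zero {r : E n → ℝ} {α β : E n → E n → ℝ} {v w : E n}
    (hr : DifferentiableAt ℝ r p) (hα : ∀ u, DifferentiableAt ℝ (fun q => α q u) p)
    (hβ : ∀ u, DifferentiableAt ℝ (fun q => β q u) p) (hv : α p v = 0) (hw : α p w = 0)
    (x : E n) :
    fderiv ℝ (fun q => r q * w11 α β q v w) p x =
      r p * (fderiv ℝ (fun q => α q v) p x * β p w - fderiv ℝ (fun q => α q w) p x * β p v) := by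
  have h := hr.hasFDerivAt.fun_mul (((hα v).hasFDerivAt.fun_mul (hβ w).hasFDerivAt).fun_sub
    ((hα w).hasFDerivAt.fun_mul (hβ v).hasFDerivAt))
  simp only [w11]
  rw [h.fderiv]
  simp only [add_apply, sub_apply, smul_apply, smul_eq_mul, hv, hw]
  ring

theorem d2_mul_w11_of_eq_zero {r : E n → ℝ} {α β : E n → E n → ℝ} {v1 v2 v3 : E n}
    (hr : DifferentiableAt ℝ r p) (hα : ∀ u, DifferentiableAt ℝ (fun q => α q u) p)
    (hβ : ∀ u, DifferentiableAt ℝ (fun q => β q u) p)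
    (h1 : α p v1 = 0) (h2 : α p v2 = 0) (h3 : α p v3 = 0) :
    d2 (fun q v w => r q * w11 α β q v w) p v1 v2 v3 = r p * w12 β (d1 α) p v1 v2 v3 := by
  simp only [d2]
  rw [fderiv_mul_w11_of_eq_zero hr hα hβ h2 h3, fderiv_mul_w11_of_eq_zero hr hα hβ h1 h3,
    fderiv_mul_w11_of_eq_zero hr hα hβ h1 h2]
  simp only [w12, d1]
  ring

theorem d1_sum_mul_of_eq_zero {ι : Type*} [Fintype ι] {f : ι → E n → ℝ}
    {α : ι → E n → E n → ℝ} {v w : E n} (hf : ∀ i, DifferentiableAt ℝ (f i) p)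
    (hα : ∀ i u, DifferentiableAt ℝ (fun q => α i q u) p)
    (hv : ∀ i, α i p v = 0) (hw : ∀ i, α i p w = 0) :
    d1 (fun q u => ∑ i, f i q * α i q u) p v w = ∑ i, f i p * d1 (α i) p v w := by
  have hfd : ∀ u, fderiv ℝ (fun q => ∑ i, f i q * α i q u) p =
      ∑ i, (f i p • fderiv ℝ (fun q => α i q u) p + α i p u • fderiv ℝ (f i) p) := fun u => by
    rw [fderiv_fun_sum (A := fun i q => f i q * α i q u) fun i _ => (hf i).mul (hα i u)]
    exact Finset.sum_congr rfl fun i _ => fderiv_fun_mul (hf i) (hα i u)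
  simp only [d1, hfd, FunLike.coe_sum, Finset.sum_apply, add_apply, smul_apply, smul_eq_mul,
    hv, hw, ← Finset.sum_sub_distrib]
  exact Finset.sum_congr rfl fun i _ => by ring

theorem InIdeal.apply_eq_zero {U : Set (E n)} {S : Set (E n → E n → E n → ℝ)}
    {η : E n → E n → E n → E n → ℝ} (h : InIdeal U S η) (hp : p ∈ U) {v1 v2 v3 : E n}
    (hS : ∀ Ω ∈ S, Ω p v1 v2 = 0 ∧ Ω p v1 v3 = 0 ∧ Ω p v2 v3 = 0) : η p v1 v2 v3 = 0 := by
  obtain ⟨m, Ω, α, hΩ, -, hη⟩ := h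
  rw [hη p hp]
  refine Finset.sum_eq_zero fun j _ => ?_
  obtain ⟨h12, h13, h23⟩ := hS _ (hΩ j)
  simp [w12, h12, h13, h23]

theorem InIdeal.mono {U : Set (E n)} {S S' : Set (E n → E n → E n → ℝ)} (hSS' : S ⊆ S')
    {η : E n → E n → E n → E n → ℝ} : InIdeal U S η → InIdeal U S' η := by
  rintro ⟨m, Ω, α, hΩ, hα, hη⟩
  exact ⟨m, Ω, α, fun j => hSS' (hΩ j), hα, hη⟩

theorem Next_mono {U : Set (E n)} {S S' : Set (E n → E n → E n → ℝ)} (hSS' : S ⊆ S') :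
    Next U S ⊆ Next U S' :=
  fun _ hω => ⟨hSS' hω.1, hω.2.mono hSS'⟩

theorem sum_sum_ite_le_eq_sum_diag {ι M : Type*} [Fintype ι] [LinearOrder ι] [AddCommMonoid M]
    (g : ι → ι → M) (hg : ∀ a b, a < b → g a b = 0) :
    ∑ a, ∑ b, (if a ≤ b then g a b else 0) = ∑ a, g a a := by
  refine Finset.sum_congr rfl fun a _ => ?_
  rw [Finset.sum_eq_single_of_mem a (Finset.mem_univ a) fun b _ hba => ?_, if_pos le_rfl]
  split_ifs with hab
  · exact hg a b (lt_of_le_of_ne hab (Ne.symm hba))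
  · rfl

section SODE

variable {F : Fin n → E n → ℝ}

theorem theta_GamV (b : Fin n) : theta b p (GamV F p) = 0 := by
  simp [theta, GamV]

theorem psi_GamV (e : Fin n) : psi F e p (GamV F p) = 0 := by
  simp [psi, GamV, theta]

theorem theta_XHf (X : Fin n → Fin n → E n → ℝ) (c b : Fin n) :
    theta b p (XHf F X c p) = X c b p := by
  simp [theta, XHf]

theorem psi_XHf (X : Fin n → Fin n → E n → ℝ) (c e : Fin n) : psi F e p (XHf F X c p) = 0 := by
  simp [psi, XHf, theta, mul_comm]

def du (b : Fin n) : E n →L[ℝ] ℝ :=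
  ContinuousLinearMap.proj b ∘L ContinuousLinearMap.snd ℝ _ _ ∘L
    ContinuousLinearMap.snd ℝ ℝ ((Fin n → ℝ) × (Fin n → ℝ))

theorem du_apply (b : Fin n) (w : E n) : du b w = w.2.2 b := rfl

theorem hasFDerivAt_theta (b : Fin n) (v : E n) :
    HasFDerivAt (fun q => theta b q v) (-(v.1 • du b)) p :=
  ((du b).hasFDerivAt.mul_const v.1).const_sub (v.2.1 b)

theorem differentiableAt_Gc {e : Fin n} (hF : ContDiffAt ℝ 2 (F e) p) (b : Fin n) :
    DifferentiableAt ℝ (Gc F e b) p :=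
  (((hF.fderiv_right (m := 1) le_rfl).differentiableAt one_ne_zero).clm_apply
    (differentiableAt_const (eu b))).const_mul _

theorem hasFDerivAt_psi {e : Fin n} (hF : ContDiffAt ℝ 2 (F e) p) (v : E n) :
    HasFDerivAt (fun q => psi F e q v)
      (-(v.1 • fderiv ℝ (F e) p) +
        ∑ b, (Gc F e b p • -(v.1 • du b) + theta b p v • fderiv ℝ (Gc F e b) p)) p :=
  (((hF.differentiableAt two_ne_zero).hasFDerivAt.mul_const v.1).const_sub (v.2.2 e)).add
    (HasFDerivAt.fun_sum fun b _ =>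
      (differentiableAt_Gc hF b).hasFDerivAt.fun_mul (hasFDerivAt_theta b v))

theorem fderiv_psi {e : Fin n} (hF : ContDiffAt ℝ 2 (F e) p) (v w : E n) :
    fderiv ℝ (fun q => psi F e q v) p w = -(fderiv ℝ (F e) p w * v.1) +
      ∑ b, (fderiv ℝ (Gc F e b) p w * theta b p v - Gc F e b p * (w.2.2 b * v.1)) := by
  simp only [(hasFDerivAt_psi hF v).fderiv, add_apply, neg_apply, smul_apply, FunLike.coe_sum,
    Finset.sum_apply, du_apply, smul_eq_mul]
  congr 1
  · ring
  · exact Finset.sum_congr rfl fun b _ => by ring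

theorem mk_zero_eq_sum_ex_add_sum_eu (x u : Fin n → ℝ) :
    ((0, x, u) : E n) = ∑ b, x b • ex b + ∑ b, u b • eu b := by
  ext i <;> simp [ex, eu, Prod.fst_sum, Prod.snd_sum, Pi.single_apply]

theorem fderiv_apply_XHf (f : E n → ℝ) (X : Fin n → Fin n → E n → ℝ) (c : Fin n) :
    fderiv ℝ f p (XHf F X c p) = ∑ b, X c b p * fderiv ℝ f p (ex b) -
      ∑ b, (∑ g, X c g p * Gc F b g p) * fderiv ℝ f p (eu b) := by
  rw [XHf, mk_zero_eq_sum_ex_add_sum_eu]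
  simp [map_add, map_sum, map_smul, Finset.sum_neg_distrib, sub_eq_add_neg]

theorem d1_psi_GamV_XHf {e : Fin n} (hF : ContDiffAt ℝ 2 (F e) p)
    (X : Fin n → Fin n → E n → ℝ) (c : Fin n) :
    d1 (psi F e) p (GamV F p) (XHf F X c p) = -∑ b, Phi F e b p * X c b p := by
  have hFu : ∀ b, fderiv ℝ (F e) p (eu b) = -2 * Gc F e b p := fun b => by simp [Gc]
  simp only [d1, fderiv_psi hF, fderiv_apply_XHf, hFu, theta_XHf, theta_GamV]
  have hswap : ∑ b, (∑ g, Gc F g b p * Gc F e g p) * X c b p =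
      ∑ b, Gc F e b p * ∑ g, X c g p * Gc F b g p := by
    simp only [Finset.sum_mul, Finset.mul_sum]
    rw [Finset.sum_comm]
    exact Finset.sum_congr rfl fun _ _ => Finset.sum_congr rfl fun _ _ => by ring
  simp only [XHf, GamV, Phi, Gam, mul_zero, mul_one, sub_zero, neg_zero, zero_add,
    sub_mul, neg_mul, Finset.sum_sub_distrib, Finset.sum_neg_distrib, hswap]
  simp only [Finset.mul_sum, Finset.sum_mul, mul_neg, Finset.sum_neg_distrib,
    Finset.sum_const_zero]
  have h2 : ∑ b, ∑ g, X c g p * Gc F b g p * (2 * Gc F e b p) =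
      2 * ∑ b, ∑ g, Gc F e b p * (X c g p * Gc F b g p) := by
    simp only [Finset.mul_sum]
    exact Finset.sum_congr rfl fun _ _ => Finset.sum_congr rfl fun _ _ => by ring
  have hcomm : ∑ b, fderiv ℝ (F e) p (ex b) * X c b p = ∑ b, X c b p * fderiv ℝ (F e) p (ex b) :=
    Finset.sum_congr rfl fun _ _ => mul_comm _ _
  rw [h2, hcomm]
  ring

end SODE

section Eigenforms

variable {F : Fin n → E n → ℝ} {phc : Fin n → Fin n → E n → ℝ} {U : Set (E n)}

theorem phiV_GamV (a : Fin n) : phiV F phc a p (GamV F p) = 0 := by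
  simp [phiV, psi_GamV]

theorem phiH_GamV (a : Fin n) : phiH phc a p (GamV F p) = 0 := by
  simp [phiH, theta_GamV]

theorem phiV_XHf (X : Fin n → Fin n → E n → ℝ) (a c : Fin n) :
    phiV F phc a p (XHf F X c p) = 0 := by
  simp [phiV, psi_XHf]

theorem phiH_XHf (X : Fin n → Fin n → E n → ℝ) (a c : Fin n) :
    phiH phc a p (XHf F X c p) = ∑ e, phc a e p * X c e p := by
  simp [phiH, theta_XHf]

theorem differentiableAt_phiV (hF : ∀ e, ContDiffAt ℝ 2 (F e) p)
    (hphc : ∀ a c, DifferentiableAt ℝ (phc a c) p) (a : Fin n) (v : E n) :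
    DifferentiableAt ℝ (fun q => phiV F phc a q v) p :=
  DifferentiableAt.fun_sum fun e _ => (hphc a e).mul (hasFDerivAt_psi (hF e) v).differentiableAt

theorem differentiableAt_phiH (hphc : ∀ a c, DifferentiableAt ℝ (phc a c) p) (a : Fin n)
    (v : E n) : DifferentiableAt ℝ (fun q => phiH phc a q v) p :=
  DifferentiableAt.fun_sum fun e _ => (hphc a e).mul (hasFDerivAt_theta e v).differentiableAt

theorem d1_phiV_GamV_XHf (hF : ∀ e, ContDiffAt ℝ 2 (F e) p)
    (hphc : ∀ a c, DifferentiableAt ℝ (phc a c) p) (X : Fin n → Fin n → E n → ℝ) {c : Fin n}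
    {μ : ℝ} (heig : ∀ e, ∑ b, Phi F e b p * X c b p = μ * X c e p) (a : Fin n) :
    d1 (phiV F phc a) p (GamV F p) (XHf F X c p) = -μ * phiH phc a p (XHf F X c p) := by
  rw [show phiV F phc a = fun q u => ∑ e, phc a e q * psi F e q u from rfl,
    d1_sum_mul_of_eq_zero (hphc a) (fun e u => (hasFDerivAt_psi (hF e) u).differentiableAt)
      (fun _ => psi_GamV _) (fun _ => psi_XHf X c _)]
  simp only [d1_psi_GamV_XHf (hF _), heig, phiH_XHf, Finset.mul_sum]
  exact Finset.sum_congr rfl fun _ _ => by ring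

theorem differentiableAt_omab (hF : ∀ e, ContDiffAt ℝ 2 (F e) p)
    (hphc : ∀ a c, DifferentiableAt ℝ (phc a c) p) (a b : Fin n) (v w : E n) :
    DifferentiableAt ℝ (fun q => omab F phc a b q v w) p := by
  have hV := differentiableAt_phiV hF hphc
  have hH := differentiableAt_phiH hphc
  exact ((((hV a v).mul (hH b w)).sub ((hV a w).mul (hH b v))).add
    (((hV b v).mul (hH a w)).sub ((hV b w).mul (hH a v)))).const_mul _

theorem d2_mul_omab_GamV_XHf (hF : ∀ e, ContDiffAt ℝ 2 (F e) p)
    (hphc : ∀ a c, DifferentiableAt ℝ (phc a c) p) (X : Fin n → Fin n → E n → ℝ)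
    {c d : Fin n} {μc μd : ℝ} (heigc : ∀ e, ∑ b, Phi F e b p * X c b p = μc * X c e p)
    (heigd : ∀ e, ∑ b, Phi F e b p * X d b p = μd * X d e p) {r : E n → ℝ}
    (hr : DifferentiableAt ℝ r p) (a b : Fin n) :
    d2 (fun q v w => r q * omab F phc a b q v w) p (GamV F p) (XHf F X c p) (XHf F X d p) =
      r p * ((μd - μc) / 2 * (phiH phc a p (XHf F X c p) * phiH phc b p (XHf F X d p) +
        phiH phc a p (XHf F X d p) * phiH phc b p (XHf F X c p))) := by
  have hV := differentiableAt_phiV hF hphc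
  have hH := differentiableAt_phiH hphc
  have hr2 : DifferentiableAt ℝ (fun q => r q / 2) p := by fun_prop
  have hsplit : (fun q v w => r q * omab F phc a b q v w) = fun q v w =>
      r q / 2 * w11 (phiV F phc a) (phiH phc b) q v w +
        r q / 2 * w11 (phiV F phc b) (phiH phc a) q v w := by
    funext q v w
    simp only [omab]
    ring
  have hdiff : ∀ a b v w, DifferentiableAt ℝ
      (fun q => r q / 2 * w11 (phiV F phc a) (phiH phc b) q v w) p := fun a b v w =>
    hr2.mul (((hV a v).mul (hH b w)).sub ((hV a w).mul (hH b v)))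
  rw [hsplit, d2_add (hdiff a b) (hdiff b a),
    d2_mul_w11_of_eq_zero hr2 (hV a) (hH b) (phiV_GamV a) (phiV_XHf X a c)
      (phiV_XHf X a d),
    d2_mul_w11_of_eq_zero hr2 (hV b) (hH a) (phiV_GamV b) (phiV_XHf X b c)
      (phiV_XHf X b d)]
  simp only [w12, phiH_GamV, d1_phiV_GamV_XHf hF hphc X heigc,
    d1_phiV_GamV_XHf hF hphc X heigd]
  ring

theorem omab_self (a : Fin n) (q v w : E n) : omab F phc a a q v w = oma F phc a q v w := by
  simp only [omab, oma]
  ring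

theorem SigmaT1_subset_Sigma0 : SigmaT1 F phc U ⊆ Sigma0 F phc U := by
  rintro ω ⟨r, hr, hrep⟩
  refine ⟨fun a b => if a = b then r a else 0, fun a b => ?_, fun q hq v w => ?_⟩
  · show ContDiffOn ℝ _ (if a = b then r a else 0) U
    split_ifs
    exacts [hr a, contDiffOn_const]
  · rw [hrep q hq, sum_sum_ite_le_eq_sum_diag _ fun a b hab => by simp [hab.ne]]
    simp [omab_self]

theorem omab_GamV_left (a b : Fin n) (w : E n) : omab F phc a b p (GamV F p) w = 0 := by
  simp [omab, w11, phiV_GamV, phiH_GamV]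

theorem omab_XHf_XHf (X : Fin n → Fin n → E n → ℝ) (a b c d : Fin n) :
    omab F phc a b p (XHf F X c p) (XHf F X d p) = 0 := by
  simp [omab, w11, phiV_XHf]

theorem apply_eq_zero_of_mem_Sigma0 {ω : E n → E n → E n → ℝ} (hω : ω ∈ Sigma0 F phc U)
    (hp : p ∈ U) {v w : E n} (h : ∀ a b, omab F phc a b p v w = 0) : ω p v w = 0 := by
  obtain ⟨r, -, hrep⟩ := hω
  simp [hrep p hp, h]

theorem d2_GamV_XHf_of_mem_Sigma0 (hU : IsOpen U) (hp : p ∈ U)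
    (hF : ∀ e, ContDiffAt ℝ 2 (F e) p) (hphc : ∀ a c, DifferentiableAt ℝ (phc a c) p)
    (X : Fin n → Fin n → E n → ℝ)
    (hdual : ∀ a b, ∑ c, phc a c p * X b c p = if a = b then 1 else 0)
    {c d : Fin n} (hcd : c < d) {μc μd : ℝ}
    (heigc : ∀ e, ∑ b, Phi F e b p * X c b p = μc * X c e p)
    (heigd : ∀ e, ∑ b, Phi F e b p * X d b p = μd * X d e p)
    {ω : E n → E n → E n → ℝ} {r : Fin n → Fin n → E n → ℝ}
    (hr : ∀ a b, DifferentiableAt ℝ (r a b) p)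
    (hrep : ∀ q ∈ U, ∀ v w, ω q v w =
      ∑ a, ∑ b, if a ≤ b then r a b q * omab F phc a b q v w else 0) :
    d2 ω p (GamV F p) (XHf F X c p) (XHf F X d p) = r c d p * ((μd - μc) / 2) := by
  set r' : Fin n × Fin n → E n → ℝ := fun ab q => if ab.1 ≤ ab.2 then r ab.1 ab.2 q else 0
  have hr' : ∀ ab, DifferentiableAt ℝ (r' ab) p := fun ab => by
    by_cases h : ab.1 ≤ ab.2
    · simpa [r', h] using hr ab.1 ab.2
    · simp [r', h]
  rw [d2_congr_of_eqOn hU hp (Ω' := fun q v w => ∑ ab, r' ab q * omab F phc ab.1 ab.2 q v w)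
      fun q hq v w => by simp [hrep q hq, r', Fintype.sum_prod_type, ite_mul],
    d2_sum fun ab v w => ?_]
  · simp only [d2_mul_omab_GamV_XHf hF hphc X heigc heigd (hr' _), phiH_XHf, hdual]
    simp [Fintype.sum_prod_type, r', mul_add, Finset.sum_add_distrib, hcd.le, not_le.2 hcd]
  · exact (hr' ab).mul (differentiableAt_omab hF hphc _ _ v w)

theorem Next_Sigma0_subset_SigmaT1 (hU : IsOpen U) {lam : Fin n → E n → ℝ}
    {X : Fin n → Fin n → E n → ℝ} (hE : EigenData F U lam X phc) :
    Next U (Sigma0 F phc U) ⊆ SigmaT1 F phc U := by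
  rintro ω ⟨⟨r, hr, hrep⟩, hdω⟩
  have hoff : ∀ p ∈ U, ∀ c d, c < d → r c d p = 0 := by
    intro p hp c d hcd
    have hF : ∀ e, ContDiffAt ℝ 2 (F e) p := fun e =>
      ((hE.smooth_F e).contDiffAt (hU.mem_nhds hp)).of_le (WithTop.coe_le_coe.2 le_top)
    have hdiff : ∀ {f : E n → ℝ}, ContDiffOn ℝ (⊤ : ℕ∞) f U → DifferentiableAt ℝ f p :=
      fun hf => (hf.contDiffAt (hU.mem_nhds hp)).differentiableAt (by simp)
    have hvanish : d2 ω p (GamV F p) (XHf F X c p) (XHf F X d p) = 0 :=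
      hdω.apply_eq_zero hp fun Ω hΩ =>
        ⟨apply_eq_zero_of_mem_Sigma0 hΩ hp fun a b => omab_GamV_left a b _,
          apply_eq_zero_of_mem_Sigma0 hΩ hp fun a b => omab_GamV_left a b _,
          apply_eq_zero_of_mem_Sigma0 hΩ hp fun a b => omab_XHf_XHf X a b c d⟩
    rw [d2_GamV_XHf_of_mem_Sigma0 hU hp hF (fun a c => hdiff (hE.smooth_phc a c)) X
      (hE.dual p hp) hcd (hE.eigen p hp c) (hE.eigen p hp d) (fun a b => hdiff (hr a b))
      hrep] at hvanish
    have hne : (lam d p - lam c p) / 2 ≠ 0 :=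
      div_ne_zero (sub_ne_zero.2 (hE.distinct p hp d c hcd.ne')) two_ne_zero
    exact (mul_eq_zero.1 hvanish).resolve_right hne
  refine ⟨fun a => r a a, fun a => hr a a, fun p hp v w => ?_⟩
  rw [hrep p hp, sum_sum_ite_le_eq_sum_diag _ fun a b hab => by simp [hoff p hp a b hab]]
  simp [omab_self]

end Eigenforms

/-- the sequences Σ¹ ⊇ Σ² ⊇ … and Σ̃¹ ⊇ Σ̃² ⊇ … interleave:
Σ̃¹ ⊇ Σ¹ ⊇ Σ̃² ⊇ Σ² ⊇ …, i.e. Σ^p ⊆ Σ̃^p and Σ̃^{p+1} ⊆ Σ^p for all p ≥ 1.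
(Here `SigSeq F phc U p` is Σ^p and `SigTSeq F phc U k` is Σ̃^{k+1}.) -/
theorem stmt13 {n : ℕ} (U : Set (E n)) (hU : IsOpen U) (F : Fin n → E n → ℝ)
    (lam : Fin n → E n → ℝ) (X phc : Fin n → Fin n → E n → ℝ)
    (hE : EigenData F U lam X phc) :
    ∀ k : ℕ,
      SigSeq F phc U (k + 1) ⊆ SigTSeq F phc U k ∧
      SigTSeq F phc U (k + 1) ⊆ SigSeq F phc U (k + 1) := by
  intro k
  induction k with
  | zero => exact ⟨Next_Sigma0_subset_SigmaT1 hU hE, Next_mono SigmaT1_subset_Sigma0⟩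
  | succ k ih => exact ⟨Next_mono ih.1, Next_mono ih.2⟩

end IP
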